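/- Let $\tau \ge 1$ be an integer, let $n \ge 0$, and let $a_1,\dots,a_n$ be nonnegative integers. Let $E \subseteq \{1,\dots,n\}$ be the set of indices $i$ with $a_i$ even, and let $O$ be its complement (so $a_i$ is odd for $i \in O$). Set $\sigma = \sum_{i \in E} a_i$ (an even integer) and $j = \sigma/2$. If $\sum_{i=1}^n a_i^2 < 4\tau$, then $$\sum_{i \in E} (a_i - 1)^2 + \sum_{i \in O} a_i^2 - n \; < \; 8 \cdot \max\left\{ \left\lfloor \frac{\tau + 1 - j}{2} \right\rfloor,\, 0 \right\},$$ where $\lfloor \cdot \rfloor$ denotes the floor of an integer divided by $2$. -/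
import Mathlib


/-- Arithmetic core of the proof that `sd₊(K) ≥ 4τ(K)` for Floer thin knots:
with `E` the even entries and `O` the odd entries of a nonnegative integer vector `a`,
`σ = ∑_{i∈E} aᵢ`, `j = σ/2`, if `∑ aᵢ² < 4τ` then
`∑_{i∈E}(aᵢ-1)² + ∑_{i∈O} aᵢ² - n < 8·max(⌊(τ+1-j)/2⌋, 0)`. -/
theorem stmt_15 (τ : ℤ) (hτ : 1 ≤ τ) (n : ℕ) (a : Fin n → ℤ) (ha : ∀ i, 0 ≤ a i)
    (h : ∑ i, (a i)^2 < 4 * τ) :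
    (∑ i ∈ Finset.univ.filter (fun i => Even (a i)), (a i - 1)^2)
      + (∑ i ∈ Finset.univ.filter (fun i => ¬ Even (a i)), (a i)^2)
      - (n : ℤ)
    < 8 * max
        (Int.fdiv (τ + 1 - (∑ i ∈ Finset.univ.filter (fun i => Even (a i)), a i) / 2) 2)
        0 := by
  classical
  set E := Finset.univ.filter (fun i => Even (a i)) with hE
  set O := Finset.univ.filter (fun i => ¬ Even (a i)) with hO
  set σ := ∑ i ∈ E, a i with hσ
  -- σ is even
  have hσev : Even σ := by
    apply Finset.even_sum
    intro i hi
    simpa [hE] using (Finset.mem_filter.mp hi).2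
  -- split the square sum
  have hsplit : ∑ i ∈ E, (a i)^2 + ∑ i ∈ O, (a i)^2 = ∑ i, (a i)^2 :=
    Finset.sum_filter_add_sum_filter_not _ _ _
  have hcard : E.card + O.card = n := by
    have := Finset.card_filter_add_card_filter_not
      (s := (Finset.univ : Finset (Fin n))) (p := fun i => Even (a i))
    simpa only [Finset.card_univ, Fintype.card_fin] using this
  have h1 : ∑ i ∈ E, (a i - 1)^2 = ∑ i ∈ E, (a i)^2 - 2 * σ + E.card := by
    have hc : ∀ i ∈ E, (a i - 1)^2 = a i ^ 2 - 2 * a i + 1 := fun i _ => by ring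
    rw [Finset.sum_congr rfl hc, Finset.sum_add_distrib, Finset.sum_sub_distrib, hσ,
      Finset.mul_sum]
    simp
  -- floor bound
  set j := σ / 2 with hj
  have h2j : 2 * j = σ := by
    rcases hσev with ⟨k, hk⟩
    omega
  have hfd : Int.fdiv (τ + 1 - j) 2 = (τ + 1 - j) / 2 := Int.fdiv_eq_ediv_of_nonneg _ (by norm_num)
  have hfb : 2 * ((τ + 1 - j) / 2) ≥ τ - j := by omega
  have hcO : (0 : ℤ) ≤ O.card := by positivity
  rw [h1, hfd]
  have hmax : (τ + 1 - j) / 2 ≤ max ((τ + 1 - j) / 2) 0 := le_max_left _ _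
  have hn : (n : ℤ) = E.card + O.card := by exact_mod_cast hcard.symm
  linarith [hsplit, h]
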